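/- For any reals b₁, d₁, b₂, d₂ and σ > 0, the integral over all real t of |Φ((t−b₁)/σ)·Φ((d₁−t)/σ) − Φ((t−b₂)/σ)·Φ((d₂−t)/σ)| dt is at most |b₁−b₂| + |d₁−d₂|. -/

import Mathlib

/-!
Since `0 ≤ Φ ≤ 1`, the bound `|p₁ q₁ - p₂ q₂| ≤ |p₁ - p₂| + |q₁ - q₂|` splits the integrand into a
part depending on `b₁, b₂` and one depending on `d₁, d₂`. Each has the form `|F (t - a) - F (t - b)|`
for a monotone (or antitone) `F` with values in `[0, 1]`, and the integral of `F t - F (t - h)`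
telescopes: over `[-R, R]` it is the integral of `F` over `[R - h, R]` minus that over
`[-R - h, -R]`, hence at most `h`.
-/

open MeasureTheory Real Filter

noncomputable def phi (t : ℝ) : ℝ := Real.exp (-t^2/2) / Real.sqrt (2*Real.pi)

noncomputable def Phi (x : ℝ) : ℝ := ∫ s in Set.Iic x, phi s

open intervalIntegral

lemma integrable_and_integral_le_of_intervalIntegral_le {g : ℝ → ℝ} {C : ℝ}
    (hg : ∀ t, 0 ≤ g t) (hgi : ∀ a b, IntervalIntegrable g volume a b)
    (hC : ∀ R, ∫ t in -R..R, g t ≤ C) :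
    Integrable g ∧ ∫ t, g t ≤ C := by
  have hneg : Tendsto (fun R : ℝ => -R) atTop atBot := tendsto_neg_atTop_atBot
  have hnorm (R : ℝ) : ∫ t in -R..R, ‖g t‖ = ∫ t in -R..R, g t :=
    integral_congr fun t _ => Real.norm_of_nonneg (hg t)
  have hint : Integrable g :=
    integrable_of_intervalIntegral_norm_bounded C (fun R => (hgi (-R) R).1) hneg tendsto_id
      (Eventually.of_forall fun R => (hnorm R).trans_le (hC R))
  exact ⟨hint, le_of_tendsto' (intervalIntegral_tendsto_integral hint hneg tendsto_id) hC⟩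

section Monotone

variable {f : ℝ → ℝ} {m M : ℝ}

lemma Monotone.intervalIntegral_sub_comp_sub_le (hf : Monotone f) (hm : ∀ t, m ≤ f t)
    (hM : ∀ t, f t ≤ M) {h : ℝ} (hh : 0 ≤ h) (R : ℝ) :
    ∫ t in -R..R, (f t - f (t - h)) ≤ (M - m) * h := by
  have hfi (a b : ℝ) : IntervalIntegrable f volume a b := hf.intervalIntegrable
  have hfi_sub (a b : ℝ) : IntervalIntegrable (fun t => f (t - h)) volume a b :=
    (hf.comp fun _ _ hxy => sub_le_sub_right hxy h).intervalIntegrable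
  have htelescope : ∫ t in -R..R, (f t - f (t - h)) =
      (∫ t in R - h..R, f t) - ∫ t in -R - h..-R, f t := by
    rw [integral_sub (hfi _ _) (hfi_sub _ _), integral_comp_sub_right,
      integral_interval_sub_interval_comm' (hfi _ _) (hfi _ _) (hfi _ _)]
  have hupper : ∫ t in R - h..R, f t ≤ M * h :=
    calc ∫ t in R - h..R, f t ≤ ∫ _ in R - h..R, M :=
          integral_mono_on (by linarith) (hfi _ _) intervalIntegrable_const fun t _ => hM t
      _ = M * h := by simp [mul_comm]
  have hlower : m * h ≤ ∫ t in -R - h..-R, f t :=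
    calc m * h = ∫ _ in -R - h..-R, m := by simp [mul_comm]
      _ ≤ ∫ t in -R - h..-R, f t :=
          integral_mono_on (by linarith) intervalIntegrable_const (hfi _ _) fun t _ => hm t
  rw [htelescope]
  linarith

lemma Monotone.integrable_sub_comp_sub_and_integral_le (hf : Monotone f) (hm : ∀ t, m ≤ f t)
    (hM : ∀ t, f t ≤ M) {h : ℝ} (hh : 0 ≤ h) :
    Integrable (fun t => f t - f (t - h)) ∧ ∫ t, (f t - f (t - h)) ≤ (M - m) * h :=
  integrable_and_integral_le_of_intervalIntegral_le (fun _ => sub_nonneg.2 (hf (by linarith)))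
    (fun _ _ => hf.intervalIntegrable.sub
      (hf.comp fun _ _ hxy => sub_le_sub_right hxy h).intervalIntegrable)
    (hf.intervalIntegral_sub_comp_sub_le hm hM hh)

lemma Monotone.integrable_abs_sub_comp_sub_and_integral_le (hf : Monotone f)
    (hm : ∀ t, m ≤ f t) (hM : ∀ t, f t ≤ M) (a b : ℝ) :
    Integrable (fun t => |f (t - a) - f (t - b)|) ∧
      ∫ t, |f (t - a) - f (t - b)| ≤ (M - m) * |a - b| := by
  wlog hab : a ≤ b generalizing a b
  · simpa only [abs_sub_comm] using this b a (le_of_not_ge hab)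
  have hshift (t : ℝ) : |f (t - a) - f (t - b)| = f (t - a) - f (t - a - (b - a)) := by
    rw [abs_of_nonneg (sub_nonneg.2 (hf (by linarith))), sub_sub_sub_cancel_right]
  obtain ⟨hint, hle⟩ := hf.integrable_sub_comp_sub_and_integral_le hm hM (sub_nonneg.2 hab)
  simp_rw [hshift, abs_sub_comm a, abs_of_nonneg (sub_nonneg.2 hab)]
  exact ⟨hint.comp_sub_right a,
    (integral_sub_right_eq_self (fun s => f s - f (s - (b - a))) a).trans_le hle⟩

lemma Antitone.integrable_abs_sub_comp_sub_and_integral_le (hf : Antitone f)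
    (hm : ∀ t, m ≤ f t) (hM : ∀ t, f t ≤ M) (a b : ℝ) :
    Integrable (fun t => |f (t - a) - f (t - b)|) ∧
      ∫ t, |f (t - a) - f (t - b)| ≤ (M - m) * |a - b| := by
  have := hf.neg.integrable_abs_sub_comp_sub_and_integral_le (m := -M) (M := -m)
    (fun t => neg_le_neg (hM t)) (fun t => neg_le_neg (hm t)) a b
  simpa only [Pi.neg_apply, neg_sub_neg, abs_sub_comm (f (_ - b)), sub_neg_eq_add,
    neg_add_eq_sub] using this

end Monotone

lemma abs_mul_sub_mul_le_abs_sub_add_abs_sub {p₁ q₁ p₂ q₂ : ℝ} (hq₁ : |q₁| ≤ 1)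
    (hp₂ : |p₂| ≤ 1) : |p₁ * q₁ - p₂ * q₂| ≤ |p₁ - p₂| + |q₁ - q₂| :=
  calc |p₁ * q₁ - p₂ * q₂| = |(p₁ - p₂) * q₁ + p₂ * (q₁ - q₂)| := by ring_nf
    _ ≤ |p₁ - p₂| * |q₁| + |p₂| * |q₁ - q₂| := by
      rw [← abs_mul, ← abs_mul]
      exact abs_add_le _ _
    _ ≤ |p₁ - p₂| + |q₁ - q₂| := by
      nlinarith [abs_nonneg (p₁ - p₂), abs_nonneg (q₁ - q₂)]

lemma phi_nonneg (t : ℝ) : 0 ≤ phi t := by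
  unfold phi
  positivity

lemma phi_eq_exp_div_sqrt (t : ℝ) : phi t = Real.exp (-(1 / 2) * t ^ 2) / Real.sqrt (2 * π) := by
  unfold phi
  ring_nf

lemma integrable_phi : Integrable phi := by
  simpa only [← phi_eq_exp_div_sqrt] using
    (integrable_exp_neg_mul_sq (b := 1 / 2) (by norm_num)).div_const (Real.sqrt (2 * π))

lemma integral_phi : ∫ t, phi t = 1 := by
  simp_rw [phi_eq_exp_div_sqrt, MeasureTheory.integral_div, integral_gaussian]
  rw [show π / (1 / 2) = 2 * π by ring]
  exact div_self (by positivity)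

lemma Phi_nonneg (x : ℝ) : 0 ≤ Phi x :=
  setIntegral_nonneg measurableSet_Iic fun t _ => phi_nonneg t

lemma Phi_le_one (x : ℝ) : Phi x ≤ 1 :=
  integral_phi ▸ setIntegral_le_integral integrable_phi (Eventually.of_forall phi_nonneg)

lemma Phi_monotone : Monotone Phi := fun _ _ hxy =>
  setIntegral_mono_set integrable_phi.integrableOn (Eventually.of_forall phi_nonneg)
    (Set.Iic_subset_Iic.2 hxy).eventuallyLE

lemma abs_Phi_le_one (x : ℝ) : |Phi x| ≤ 1 :=
  abs_le.2 ⟨by linarith [Phi_nonneg x], Phi_le_one x⟩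

theorem stmt7 (b₁ d₁ b₂ d₂ σ : ℝ) (hσ : 0 < σ) :
    ∫ t : ℝ, |Phi ((t - b₁) / σ) * Phi ((d₁ - t) / σ) -
        Phi ((t - b₂) / σ) * Phi ((d₂ - t) / σ)| ≤ |b₁ - b₂| + |d₁ - d₂| := by
  have hup : Monotone fun s => Phi (s / σ) :=
    Phi_monotone.comp fun _ _ h => div_le_div_of_nonneg_right h hσ.le
  have hdown : Antitone fun s => Phi (-s / σ) :=
    Phi_monotone.comp_antitone fun _ _ h => div_le_div_of_nonneg_right (neg_le_neg h) hσ.le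
  obtain ⟨hib, hb⟩ := hup.integrable_abs_sub_comp_sub_and_integral_le
    (fun _ => Phi_nonneg _) (fun _ => Phi_le_one _) b₁ b₂
  obtain ⟨hid, hd⟩ := hdown.integrable_abs_sub_comp_sub_and_integral_le
    (fun _ => Phi_nonneg _) (fun _ => Phi_le_one _) d₁ d₂
  simp only [neg_sub, sub_zero, one_mul] at hb hd hid
  calc _ ≤ ∫ t, (|Phi ((t - b₁) / σ) - Phi ((t - b₂) / σ)| +
          |Phi ((d₁ - t) / σ) - Phi ((d₂ - t) / σ)|) :=
        integral_mono_of_nonneg (Eventually.of_forall fun _ => abs_nonneg _) (hib.add hid)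
          (Eventually.of_forall fun _ =>
            abs_mul_sub_mul_le_abs_sub_add_abs_sub (abs_Phi_le_one _) (abs_Phi_le_one _))
    _ = (∫ t, |Phi ((t - b₁) / σ) - Phi ((t - b₂) / σ)|) +
          ∫ t, |Phi ((d₁ - t) / σ) - Phi ((d₂ - t) / σ)| := integral_add hib hid
    _ ≤ |b₁ - b₂| + |d₁ - d₂| := add_le_add hb hd
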